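/- arXiv:1612.03695 — 2 statements merged into one kernel-verified Lean document; each statement's English description precedes it below -/
import Mathlib

section
/- Let A be an m×n matrix with rational entries and B, C ∈ ℚ^m, and set Q^ε = {x ∈ ℝ^n : A x ≥ B + ε C}. If the set S = {ε ≥ 0 : Q^ε ≠ ∅} is nonempty and bounded above, then sup S is a rational number. -/
/-- Interpolation between finitely many lower and upper bounds. -/
lemma aux_between {P N : Type} [Fintype P] [Fintype N] (L : P → ℝ) (U : N → ℝ)
    (h : ∀ p q, L p ≤ U q) : ∃ t : ℝ, (∀ p, L p ≤ t) ∧ (∀ q, t ≤ U q) := by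
  cases isEmpty_or_nonempty P with
  | inl hP =>
    cases isEmpty_or_nonempty N with
    | inl hN => exact ⟨0, fun p => (hP.false p).elim, fun q => (hN.false q).elim⟩
    | inr hN =>
      refine ⟨Finset.univ.inf' (Finset.univ_nonempty) U, fun p => (hP.false p).elim, ?_⟩
      exact fun q => Finset.inf'_le _ (Finset.mem_univ q)
  | inr hP =>
    refine ⟨Finset.univ.sup' (Finset.univ_nonempty) L, fun p => Finset.le_sup' _ (Finset.mem_univ p), ?_⟩
    exact fun q => Finset.sup'_le _ _ fun p _ => h p q

/-- One step of Fourier–Motzkin elimination, over ℝ. -/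
lemma aux_step {ι : Type} [Fintype ι] {n : ℕ} (a : ι → ℝ) (r : ι → Fin n → ℝ) (β : ι → ℝ) :
    (∃ x0 : ℝ, ∃ y : Fin n → ℝ, ∀ i, β i ≤ a i * x0 + ∑ j, r i j * y j) ↔
    (∃ y : Fin n → ℝ, (∀ i, a i = 0 → β i ≤ ∑ j, r i j * y j) ∧
      ∀ p q, 0 < a p → a q < 0 →
        (-a q) * β p + a p * β q ≤ ∑ j, ((-a q) * r p j + a p * r q j) * y j) := by
  constructor
  · rintro ⟨x0, y, hx⟩
    refine ⟨y, fun i hi => by simpa [hi] using hx i, fun p q hp hq => ?_⟩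
    have h1 := mul_le_mul_of_nonneg_left (hx p) (le_of_lt (neg_pos.2 hq))
    have h2 := mul_le_mul_of_nonneg_left (hx q) (le_of_lt hp)
    have hsum : ∑ j, ((-a q) * r p j + a p * r q j) * y j
        = (-a q) * ∑ j, r p j * y j + a p * ∑ j, r q j * y j := by
      rw [Finset.mul_sum, Finset.mul_sum, ← Finset.sum_add_distrib]
      congr 1; ext j; ring
    rw [hsum]; nlinarith [h1, h2]
  · rintro ⟨y, hz, hpn⟩
    have key : ∀ (p : {p : ι // 0 < a p}) (q : {q : ι // a q < 0}),
        (fun p : {p : ι // 0 < a p} => (β p.1 - ∑ j, r p.1 j * y j) / a p.1) p ≤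
        (fun q : {q : ι // a q < 0} => (β q.1 - ∑ j, r q.1 j * y j) / a q.1) q := by
      rintro ⟨p, hp⟩ ⟨q, hq⟩
      show (β p - ∑ j, r p j * y j) / a p ≤ (β q - ∑ j, r q j * y j) / a q
      have h := hpn p q hp hq
      have hsum : ∑ j, ((-a q) * r p j + a p * r q j) * y j
          = (-a q) * ∑ j, r p j * y j + a p * ∑ j, r q j * y j := by
        rw [Finset.mul_sum, Finset.mul_sum, ← Finset.sum_add_distrib]
        congr 1; ext j; ring
      rw [hsum] at h
      have hqne : a q ≠ 0 := ne_of_lt hq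
      have e : (β q - ∑ j, r q j * y j) / a q
          = ((∑ j, r q j * y j) - β q) / (-a q) := by
        rw [div_neg, ← neg_div, neg_sub]
      rw [e, div_le_div_iff₀ hp (neg_pos.2 hq)]
      nlinarith [h]
    obtain ⟨t, ht1, ht2⟩ := aux_between _ _ key
    refine ⟨t, y, fun i => ?_⟩
    rcases lt_trichotomy (a i) 0 with hi | hi | hi
    · have h0 : t ≤ (β i - ∑ j, r i j * y j) / a i := ht2 ⟨i, hi⟩
      have h1 := (le_div_iff_of_neg hi).1 h0
      linarith [mul_comm t (a i), h1]
    · simpa [hi] using hz i hi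
    · have h0 : (β i - ∑ j, r i j * y j) / a i ≤ t := ht1 ⟨i, hi⟩
      have h1 := (div_le_iff₀ hi).1 h0
      linarith [mul_comm t (a i), h1]

/-- Full Fourier–Motzkin elimination: a rational parametric system in `x` is
feasible iff finitely many rational affine conditions on `ε` hold. -/
lemma aux_fm : ∀ (n : ℕ) (ι : Type) [Fintype ι] (A : ι → Fin n → ℚ) (b c : ι → ℚ),
    ∃ (κ : Type) (_ : Fintype κ) (b' c' : κ → ℚ), ∀ ε : ℝ,
      (∃ x : Fin n → ℝ, ∀ i, (b i : ℝ) + ε * (c i : ℝ) ≤ ∑ j, (A i j : ℝ) * x j) ↔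
      (∀ k, (b' k : ℝ) + ε * (c' k : ℝ) ≤ 0) := by
  intro n
  induction n with
  | zero =>
    intro ι _ A b c
    refine ⟨ι, inferInstance, fun i => b i, fun i => c i, fun ε => ?_⟩
    constructor
    · rintro ⟨x, hx⟩ k
      simpa using hx k
    · intro h
      exact ⟨fun j => 0, fun i => by simpa using h i⟩
  | succ n ih =>
    intro ι _ A b c
    -- one elimination step
    set ι₁ := {i : ι // A i 0 = 0} ⊕ ({p : ι // 0 < A p 0} × {q : ι // A q 0 < 0}) with hι₁
    let A₁ : ι₁ → Fin n → ℚ := fun k j => match k with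
      | .inl z => A z.1 j.succ
      | .inr (p, q) => (-(A q.1 0)) * A p.1 j.succ + (A p.1 0) * A q.1 j.succ
    let b₁ : ι₁ → ℚ := fun k => match k with
      | .inl z => b z.1
      | .inr (p, q) => (-(A q.1 0)) * b p.1 + (A p.1 0) * b q.1
    let c₁ : ι₁ → ℚ := fun k => match k with
      | .inl z => c z.1
      | .inr (p, q) => (-(A q.1 0)) * c p.1 + (A p.1 0) * c q.1
    obtain ⟨κ, hκ, b', c', hbc⟩ := ih ι₁ A₁ b₁ c₁
    refine ⟨κ, hκ, b', c', fun ε => ?_⟩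
    rw [← hbc ε]
    -- now prove the one-step equivalence
    have step := aux_step (ι := ι) (n := n) (fun i => (A i 0 : ℝ))
      (fun i j => (A i j.succ : ℝ)) (fun i => (b i : ℝ) + ε * (c i : ℝ))
    constructor
    · rintro ⟨x, hx⟩
      have h1 : ∃ x0 : ℝ, ∃ y : Fin n → ℝ, ∀ i,
          (b i : ℝ) + ε * (c i : ℝ) ≤ (A i 0 : ℝ) * x0 + ∑ j, (A i j.succ : ℝ) * y j := by
        refine ⟨x 0, fun j => x j.succ, fun i => ?_⟩
        have := hx i
        rwa [Fin.sum_univ_succ] at this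
      obtain ⟨y, hy1, hy2⟩ := step.1 h1
      refine ⟨y, fun k => ?_⟩
      match k with
      | .inl z =>
        have hz := hy1 z.1 (by exact_mod_cast z.2)
        simp only [A₁, b₁, c₁]
        push_cast
        convert hz using 2
      | .inr (p, q) =>
        have hp : (0:ℝ) < (A p.1 0 : ℝ) := by exact_mod_cast p.2
        have hq : (A q.1 0 : ℝ) < 0 := by exact_mod_cast q.2
        have h := hy2 p.1 q.1 hp hq
        simp only [A₁, b₁, c₁]
        push_cast
        linarith [h]
    · rintro ⟨y, hy⟩
      have h2 : ∃ y : Fin n → ℝ,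
          (∀ i, (A i 0 : ℝ) = 0 → (b i : ℝ) + ε * (c i : ℝ) ≤ ∑ j, (A i j.succ : ℝ) * y j) ∧
          ∀ p q, 0 < (A p 0 : ℝ) → (A q 0 : ℝ) < 0 →
            (-(A q 0 : ℝ)) * ((b p : ℝ) + ε * (c p : ℝ)) + (A p 0 : ℝ) * ((b q : ℝ) + ε * (c q : ℝ)) ≤
            ∑ j, ((-(A q 0 : ℝ)) * (A p j.succ : ℝ) + (A p 0 : ℝ) * (A q j.succ : ℝ)) * y j := by
        refine ⟨y, fun i hi => ?_, fun p q hp hq => ?_⟩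
        · have := hy (.inl ⟨i, by exact_mod_cast hi⟩)
          simp only [A₁, b₁, c₁] at this
          push_cast at this
          convert this using 2
        · have := hy (.inr (⟨p, by exact_mod_cast hp⟩, ⟨q, by exact_mod_cast hq⟩))
          simp only [A₁, b₁, c₁] at this
          push_cast at this
          linarith [this]
      obtain ⟨x0, y', hxy⟩ := step.2 h2
      refine ⟨Fin.cons x0 y', fun i => ?_⟩
      rw [Fin.sum_univ_succ]
      simpa using hxy i

/-- For rational data `A, B, C`, the supremum of the feasibility interval
`{ε ≥ 0 : Q^ε ≠ ∅}` (when nonempty and bounded above) is rational. -/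
theorem stmt_6 (m n : ℕ) (A : Matrix (Fin m) (Fin n) ℚ) (B C : Fin m → ℚ) :
    let Q : ℝ → Set (Fin n → ℝ) := fun ε =>
      {x | (fun i => (B i : ℝ)) + ε • (fun i => (C i : ℝ)) ≤
        (A.map (fun a => (a : ℝ))).mulVec x}
    let S : Set ℝ := {ε | 0 ≤ ε ∧ (Q ε).Nonempty}
    S.Nonempty → BddAbove S → ∃ q : ℚ, sSup S = (q : ℝ) := by
  intro Q S hne hbdd
  obtain ⟨κ, hκ, b', c', hbc⟩ := aux_fm n (Fin m) (fun i j => A i j) B C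
  -- rewrite S
  have hS : S = {ε : ℝ | 0 ≤ ε ∧ ∀ k, (b' k : ℝ) + ε * (c' k : ℝ) ≤ 0} := by
    ext ε
    simp only [S, Q, Set.mem_setOf_eq, and_congr_right_iff]
    intro hε
    rw [← hbc ε]
    constructor
    · rintro ⟨x, hx⟩
      refine ⟨x, fun i => ?_⟩
      have := hx i
      simpa [Matrix.mulVec, dotProduct, Matrix.map_apply] using this
    · rintro ⟨x, hx⟩
      refine ⟨x, fun i => ?_⟩
      have := hx i
      simpa [Matrix.mulVec, dotProduct, Matrix.map_apply] using this
  obtain ⟨ε₀, hε₀⟩ := hne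
  -- the set of "upper bound" constraints
  classical
  set Pos : Finset κ := Finset.univ.filter (fun k => 0 < c' k) with hPos
  have hPosne : Pos.Nonempty := by
    by_contra hempty
    rw [Finset.not_nonempty_iff_eq_empty] at hempty
    -- then S is unbounded above
    obtain ⟨M, hM⟩ := hbdd
    have hε₀' : ε₀ ∈ {ε : ℝ | 0 ≤ ε ∧ ∀ k, (b' k : ℝ) + ε * (c' k : ℝ) ≤ 0} := hS ▸ hε₀
    have hbig : max ε₀ (M + 1) ∈ S := by
      rw [hS]
      refine ⟨le_trans hε₀'.1 (le_max_left _ _), fun k => ?_⟩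
      have hck : c' k ≤ 0 := by
        by_contra hc
        have hk : k ∈ Pos := by
          rw [hPos, Finset.mem_filter]
          exact ⟨Finset.mem_univ k, lt_of_not_ge hc⟩
        rw [hempty] at hk
        exact absurd hk (Finset.notMem_empty k)
      have hck' : (c' k : ℝ) ≤ 0 := by exact_mod_cast hck
      have h1 := hε₀'.2 k
      nlinarith [le_max_left ε₀ (M + 1), h1]
    have := hM hbig
    have := le_max_right ε₀ (M + 1)
    linarith
  -- the rational candidate
  set q : ℚ := Pos.inf' hPosne (fun k => -b' k / c' k) with hq
  obtain ⟨k₀, hk₀mem, hk₀⟩ := Finset.exists_mem_eq_inf' hPosne (fun k => -b' k / c' k)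
  have hε₀' : ε₀ ∈ {ε : ℝ | 0 ≤ ε ∧ ∀ k, (b' k : ℝ) + ε * (c' k : ℝ) ≤ 0} := hS ▸ hε₀
  -- every element of S is ≤ q
  have hub : ∀ ε ∈ S, ε ≤ (q : ℝ) := by
    intro ε hε
    rw [hS] at hε
    have hc : (0:ℝ) < (c' k₀ : ℝ) := by
      exact_mod_cast (Finset.mem_filter.1 hk₀mem).2
    have h1 := hε.2 k₀
    rw [hq, hk₀]
    push_cast
    rw [le_div_iff₀ hc]
    nlinarith
  -- q ∈ S
  have hqmem : (q : ℝ) ∈ S := by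
    rw [hS]
    have hεq : ε₀ ≤ (q : ℝ) := hub ε₀ hε₀
    refine ⟨le_trans hε₀'.1 hεq, fun k => ?_⟩
    by_cases hk : 0 < c' k
    · have hkmem : k ∈ Pos := Finset.mem_filter.2 ⟨Finset.mem_univ k, hk⟩
      have h1 : q ≤ -b' k / c' k := Finset.inf'_le _ hkmem
      have hc : (0:ℚ) < c' k := hk
      rw [le_div_iff₀ hc] at h1
      have : (q * c' k : ℚ) ≤ -b' k := h1
      have h2 : ((q : ℝ)) * (c' k : ℝ) ≤ -(b' k : ℝ) := by exact_mod_cast this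
      linarith
    · have hck : (c' k : ℝ) ≤ 0 := by
        push_cast
        exact_mod_cast le_of_not_gt hk
      have h1 := hε₀'.2 k
      nlinarith
  exact ⟨q, le_antisymm (csSup_le ⟨ε₀, hε₀⟩ hub) (le_csSup hbdd hqmem)⟩
end

section
/- Let A be an m×n real matrix and B, C ∈ ℝ^m, with Q^ε = {x : Ax ≥ B + εC}, and assume Q^0 is nonempty, bounded, and full-dimensional. Then there exist finitely many real numbers 0 = α₀ < α₁ < ⋯ < α_N (with possibly α_N = sup{ε ≥ 0 : Q^ε ≠ ∅} when finite) such that on each open interval (α_j, α_{j+1}) the set of indices i ∈ {1,…,m} for which the constraint (Ax)_i ≥ B_i + εC_i defines a facet of Q^ε is constant. -/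
/-!
The parametrised inequality system is jointly convex in `(ε, x)`, so for `ε₁ ≤ ε < ε₂` a
homothety centred at a point of the `ε₂`-face maps the `ε₁`-face into the `ε`-face; hence the
dimension of the `i`-th face cannot drop in the middle of an interval. When row `i` of `A` is
nonzero the face lies in a hyperplane, so its dimension is at most `n - 1`, and the set of
`ε ≥ 0` at which row `i` defines a facet is an interval. The same holds for a zero row with
`C i = 0`, using that `Q^ε` stays full-dimensional below any feasible parameter; a zero row
with `C i ≠ 0` meets its hyperplane only at `ε = -B i / C i`. The endpoints of these intervals
and these crossing values, cut down to `[0, sup {ε ≥ 0 | Q^ε ≠ ∅}]`, are the `α_j`.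
-/

open Module Set Matrix

theorem finrank_vectorSpan_le_of_mapsTo {k V P V₂ P₂ : Type*} [Field k] [AddCommGroup V]
    [Module k V] [AddTorsor V P] [AddCommGroup V₂] [Module k V₂] [AddTorsor V₂ P₂]
    [FiniteDimensional k V₂] (e : P ≃ᵃ[k] P₂) {s : Set P} {t : Set P₂}
    (h : MapsTo e s t) : finrank k (vectorSpan k s) ≤ finrank k (vectorSpan k t) := by
  rw [← e.linear.finrank_map_eq, ← AffineEquiv.linear_toAffineMap, AffineMap.map_vectorSpan]
  exact Submodule.finrank_mono (vectorSpan_mono k h.image_subset)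

theorem finrank_vectorSpan_le_of_subset_hyperplane {k V : Type*} [Field k] [AddCommGroup V]
    [Module k V] [FiniteDimensional k V] {f : Module.Dual k V} (hf : f ≠ 0) {r : k}
    {s : Set V} (hs : s ⊆ {x | f x = r}) : finrank k (vectorSpan k s) ≤ finrank k V - 1 := by
  have hker : vectorSpan k s ≤ LinearMap.ker f := by
    rw [vectorSpan_def, Submodule.span_le]
    rintro _ ⟨x, hx, y, hy, rfl⟩
    have hfx : f x = r := hs hx
    have hfy : f y = r := hs hy
    simp [hfx, hfy]
  have hcodim := f.finrank_ker_add_one_of_ne_zero hf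
  have hmono := Submodule.finrank_mono hker
  omega

theorem finrank_vectorSpan_of_interior_nonempty {V : Type*} [NormedAddCommGroup V]
    [NormedSpace ℝ V] [FiniteDimensional ℝ V] {s : Set V} (hs : (interior s).Nonempty) :
    finrank ℝ (vectorSpan ℝ s) = finrank ℝ V := by
  rw [AffineSubspace.vectorSpan_eq_top_of_affineSpan_eq_top ℝ V V
    (affineSpan_eq_top_of_nonempty_interior (hs.mono (interior_mono (subset_convexHull ℝ s)))),
    finrank_top]

theorem finrank_vectorSpan_le_of_convex_graph {V : Type*} [AddCommGroup V] [Module ℝ V]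
    [FiniteDimensional ℝ V] {F : ℝ → Set V}
    (hF : Convex ℝ {p : ℝ × V | p.2 ∈ F p.1}) {ε₁ ε ε₂ : ℝ} (h₁ : ε₁ ≤ ε) (h₂ : ε < ε₂)
    (hne : (F ε₂).Nonempty) :
    finrank ℝ (vectorSpan ℝ (F ε₁)) ≤ finrank ℝ (vectorSpan ℝ (F ε)) := by
  obtain ⟨y, hy⟩ := hne
  set t := (ε₂ - ε) / (ε₂ - ε₁)
  have ht : 0 < t := div_pos (by linarith) (by linarith)
  have ht₁ : t ≤ 1 := (div_le_one (by linarith)).2 (by linarith)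
  refine finrank_vectorSpan_le_of_mapsTo
    (AffineEquiv.homothetyUnitsMulHom y (Units.mk0 t ht.ne')) fun x hx => ?_
  have hε : t * ε₁ + (1 - t) * ε₂ = ε := by
    have : ε₂ - ε₁ ≠ 0 := by linarith
    simp only [t]; field_simp; ring
  have hhom : AffineMap.homothety y t x = t • x + (1 - t) • y := by
    rw [AffineMap.homothety_apply, vsub_eq_sub, vadd_eq_add, smul_sub, sub_smul, one_smul]
    abel
  have hmem := hF (x := (ε₁, x)) hx (y := (ε₂, y)) hy ht.le (by linarith) (add_sub_cancel t 1)
  simpa [AffineEquiv.coe_homothetyUnitsMulHom_apply, hhom, hε] using hmem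

theorem Set.OrdConnected.mem_iff_mem_of_csInf_notMem_of_csSup_notMem {β : Type*}
    [ConditionallyCompleteLinearOrder β] {s : Set β} (hs : s.OrdConnected) {a b : β}
    (hab : a ≤ b) (hInf : sInf s ∉ Icc a b) (hSup : sSup s ∉ Icc a b) : a ∈ s ↔ b ∈ s := by
  constructor
  · intro ha
    by_contra hb
    have hbound : b ∈ upperBounds s := fun w hw =>
      le_of_not_gt fun hbw => hb (hs.out ha hw ⟨hab, hbw.le⟩)
    exact hSup ⟨le_csSup ⟨b, hbound⟩ ha, csSup_le ⟨a, ha⟩ hbound⟩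
  · intro hb
    by_contra ha
    have hbound : a ∈ lowerBounds s := fun w hw =>
      le_of_not_gt fun hwa => ha (hs.out hw hb ⟨hwa.le, hab⟩)
    exact hInf ⟨le_csInf ⟨b, hb⟩ hbound, csInf_le ⟨a, hbound⟩ hb⟩

theorem Finset.exists_strictMonoOn_enum {β : Type*} [LinearOrder β] (U : Finset β)
    (hU : U.Nonempty) :
    ∃ (N : ℕ) (α : ℕ → β), StrictMonoOn α (Set.Iic N) ∧ (∀ j ≤ N, α j ∈ U) ∧
      ∀ u ∈ U, ∃ j ≤ N, α j = u := by
  have hk : 0 < U.card := hU.card_pos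
  set e := U.orderEmbOfFin rfl
  refine ⟨U.card - 1, fun j => e ⟨min j (U.card - 1), by omega⟩, ?_,
    fun j _ => U.orderEmbOfFin_mem rfl _, ?_⟩
  · intro i hi j hj hij
    simp only [Set.mem_Iic] at hi hj
    exact e.strictMono (Fin.mk_lt_mk.2 (by omega))
  · intro u hu
    obtain ⟨⟨j, hj⟩, rfl⟩ : u ∈ Set.range e := by rwa [U.range_orderEmbOfFin rfl]
    exact ⟨j, by omega, by simp [min_eq_left (show j ≤ U.card - 1 by omega)]⟩

theorem exists_partition_constant_on_gaps {β X : Type*} [LinearOrder β] {f : β → X}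
    (T : Finset β) {lo hi : β} (hlohi : lo ≤ hi)
    (hf : ∀ a b, lo ≤ a → a ≤ b → (∀ t ∈ T, t ∉ Icc a b) → f a = f b) :
    ∃ (N : ℕ) (α : ℕ → β), α 0 = lo ∧ (∀ j < N, α j < α (j + 1)) ∧
      (∀ j < N, ∀ x ∈ Ioo (α j) (α (j + 1)), ∀ y ∈ Ioo (α j) (α (j + 1)), f x = f y) ∧
      α N = hi := by
  set U := (insert lo (insert hi T)).filter (· ∈ Icc lo hi)
  have hloU : lo ∈ U := by simp [U, hlohi]
  have hhiU : hi ∈ U := by simp [U, hlohi]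
  obtain ⟨N, α, hmono, hmem, hsurj⟩ := U.exists_strictMonoOn_enum ⟨lo, hloU⟩
  have hαIcc : ∀ j ≤ N, α j ∈ Icc lo hi := fun j hj => (Finset.mem_filter.1 (hmem j hj)).2
  have hle : ∀ {i j}, i ≤ j → j ≤ N → α i ≤ α j := fun hij hj =>
    hmono.monotoneOn (mem_Iic.2 (le_trans hij hj)) (mem_Iic.2 hj) hij
  have hgap : ∀ j < N, ∀ u ∈ U, u ∉ Ioo (α j) (α (j + 1)) := by
    intro j hj u hu ⟨hju, huj⟩
    obtain ⟨l, hl, rfl⟩ := hsurj u hu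
    rcases le_or_gt l j with hlj | hjl
    · exact (hle hlj hj.le).not_gt hju
    · exact (hle hjl hl).not_gt huj
  have hconst : ∀ j < N, ∀ x ∈ Ioo (α j) (α (j + 1)), ∀ y ∈ Ioo (α j) (α (j + 1)), x ≤ y →
      f x = f y := by
    intro j hj x hx y hy hxy
    refine hf x y ((hαIcc j hj.le).1.trans hx.1.le) hxy fun t ht htxy => hgap j hj t ?_
      ⟨hx.1.trans_le htxy.1, htxy.2.trans_lt hy.2⟩
    refine Finset.mem_filter.2 ⟨by simp [ht], ?_, ?_⟩
    · exact (hαIcc j hj.le).1.trans (hx.1.trans_le htxy.1).le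
    · exact (htxy.2.trans_lt hy.2).le.trans (hαIcc (j + 1) hj).2
  obtain ⟨l₀, hl₀, hαl₀⟩ := hsurj lo hloU
  obtain ⟨l₁, hl₁, hαl₁⟩ := hsurj hi hhiU
  refine ⟨N, α, ?_, fun j hj => hmono (mem_Iic.2 hj.le) (mem_Iic.2 hj) j.lt_succ_self, ?_, ?_⟩
  · exact le_antisymm (hαl₀ ▸ hle l₀.zero_le hl₀) (hαIcc 0 N.zero_le).1
  · intro j hj x hx y hy
    rcases le_total x y with hxy | hyx
    · exact hconst j hj x hx y hy hxy
    · exact (hconst j hj y hy x hx hyx).symm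
  · exact le_antisymm (hαIcc N le_rfl).2 (hαl₁ ▸ hle hl₁ le_rfl)

namespace ParametricPolytope

variable {ι : Type*} {n : ℕ} (A : Matrix ι (Fin n) ℝ) (B C : ι → ℝ)

def polytope (ε : ℝ) : Set (Fin n → ℝ) := {x | B + ε • C ≤ A *ᵥ x}

theorem polytope_zero : polytope A B C 0 = {x | B ≤ A *ᵥ x} := by
  simp [polytope]

def face (i : ι) (ε : ℝ) : Set (Fin n → ℝ) :=
  polytope A B C ε ∩ {x | (A *ᵥ x) i = B i + ε * C i}

/-- For `n ≤ 1` an empty face has `finrank 0 = n - 1` and so counts as a facet. -/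
def IsFacet (i : ι) (ε : ℝ) : Prop :=
  finrank ℝ (vectorSpan ℝ (face A B C i ε)) = n - 1

theorem convex_graph_polytope :
    Convex ℝ {p : ℝ × (Fin n → ℝ) | p.2 ∈ polytope A B C p.1} := by
  rintro ⟨ε₁, x₁⟩ h₁ ⟨ε₂, x₂⟩ h₂ a b ha hb hab k
  have e₁ := h₁ k
  have e₂ := h₂ k
  simp only [Pi.add_apply, Pi.smul_apply, smul_eq_mul, Prod.smul_mk, Prod.mk_add_mk,
    mulVec_add, mulVec_smul] at e₁ e₂ ⊢
  have hB : B k = a * B k + b * B k := by rw [← add_mul, hab, one_mul]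
  nlinarith [mul_le_mul_of_nonneg_left e₁ ha, mul_le_mul_of_nonneg_left e₂ hb]

theorem convex_graph_face (i : ι) :
    Convex ℝ {p : ℝ × (Fin n → ℝ) | p.2 ∈ face A B C i p.1} := by
  have hplane : Convex ℝ {p : ℝ × (Fin n → ℝ) | (A *ᵥ p.2) i = B i + p.1 * C i} := by
    rintro ⟨ε₁, x₁⟩ h₁ ⟨ε₂, x₂⟩ h₂ a b ha hb hab
    change (A *ᵥ x₁) i = B i + ε₁ * C i at h₁
    change (A *ᵥ x₂) i = B i + ε₂ * C i at h₂
    change (A *ᵥ (a • x₁ + b • x₂)) i = B i + (a * ε₁ + b * ε₂) * C i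
    simp only [mulVec_add, mulVec_smul, Pi.add_apply, Pi.smul_apply, smul_eq_mul, h₁, h₂]
    linear_combination (B i) * hab
  exact (convex_graph_polytope A B C).inter hplane

theorem face_eq_polytope {i : ι} (hA : A i = 0) {ε : ℝ} (h : B i + ε * C i = 0) :
    face A B C i ε = polytope A B C ε := by
  ext x
  simp [face, mulVec, hA, h]

theorem face_eq_empty {i : ι} (hA : A i = 0) {ε : ℝ} (h : B i + ε * C i ≠ 0) :
    face A B C i ε = ∅ := by
  ext x
  simp [face, mulVec, hA, Ne.symm h]

theorem finrank_vectorSpan_le (s : Set (Fin n → ℝ)) : finrank ℝ (vectorSpan ℝ s) ≤ n :=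
  (Submodule.finrank_le _).trans_eq (finrank_fin_fun ℝ)

theorem finrank_polytope_eq (hQ₀ : finrank ℝ (vectorSpan ℝ (polytope A B C 0)) = n)
    {ε ε' : ℝ} (hε : 0 ≤ ε) (hεε' : ε < ε') (hne : (polytope A B C ε').Nonempty) :
    finrank ℝ (vectorSpan ℝ (polytope A B C ε)) = n :=
  le_antisymm (finrank_vectorSpan_le _)
    (hQ₀.ge.trans <|
      finrank_vectorSpan_le_of_convex_graph (convex_graph_polytope A B C) hε hεε' hne)

theorem finrank_polytope_of_between (hQ₀ : finrank ℝ (vectorSpan ℝ (polytope A B C 0)) = n)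
    {ε₁ ε ε₂ : ℝ} (h₀ : 0 ≤ ε₁) (h₁ : ε₁ < ε) (h₂ : ε < ε₂)
    (hf₁ : finrank ℝ (vectorSpan ℝ (polytope A B C ε₁)) = n - 1)
    (hf₂ : finrank ℝ (vectorSpan ℝ (polytope A B C ε₂)) = n - 1) :
    finrank ℝ (vectorSpan ℝ (polytope A B C ε)) = n - 1 := by
  rcases Nat.eq_zero_or_pos n with rfl | hn
  · exact Nat.le_zero.1 (finrank_vectorSpan_le _)
  have hempty : ∀ ε', ε₁ < ε' → polytope A B C ε' = ∅ := fun ε' hε' =>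
    not_nonempty_iff_eq_empty.1 fun hne => by
      have := finrank_polytope_eq A B C hQ₀ h₀ hε' hne
      omega
  rw [hempty ε₂ (h₁.trans h₂)] at hf₂
  rwa [hempty ε h₁]

theorem isFacet_of_between_of_row_ne_zero {i : ι} (hA : A i ≠ 0) {ε₁ ε ε₂ : ℝ}
    (h₁ : ε₁ ≤ ε) (h₂ : ε < ε₂) (hf₁ : IsFacet A B C i ε₁) (hf₂ : IsFacet A B C i ε₂) :
    IsFacet A B C i ε := by
  have hrow : (LinearMap.proj i).comp A.mulVecLin ≠ 0 := fun h => hA <| funext fun j => by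
    simpa [mulVec_single] using LinearMap.congr_fun h (Pi.single j 1)
  have hupper : finrank ℝ (vectorSpan ℝ (face A B C i ε)) ≤ n - 1 := by
    simpa using finrank_vectorSpan_le_of_subset_hyperplane hrow (r := B i + ε * C i)
      (s := face A B C i ε) fun x hx => hx.2
  refine le_antisymm hupper ?_
  rcases (face A B C i ε₂).eq_empty_or_nonempty with hempty | hne
  · rw [IsFacet, hempty, vectorSpan_empty, finrank_bot] at hf₂
    omega
  · exact hf₁.ge.trans <|
      finrank_vectorSpan_le_of_convex_graph (convex_graph_face A B C i) h₁ h₂ hne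

theorem ordConnected_isFacet (hQ₀ : finrank ℝ (vectorSpan ℝ (polytope A B C 0)) = n) {i : ι}
    (hi : A i ≠ 0 ∨ C i = 0) : {ε | 0 ≤ ε ∧ IsFacet A B C i ε}.OrdConnected := by
  refine ordConnected_of_Ioo ?_
  rintro ε₁ ⟨h₀, hf₁⟩ ε₂ ⟨-, hf₂⟩ - ε ⟨h₁, h₂⟩
  refine ⟨h₀.trans h₁.le, ?_⟩
  by_cases hA : A i = 0
  · have hC : C i = 0 := hi.resolve_left (not_not.2 hA)
    by_cases hB : B i = 0
    · have hface : ∀ ε, face A B C i ε = polytope A B C ε := fun ε =>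
        face_eq_polytope A B C hA (by simp [hB, hC])
      rw [IsFacet, hface] at hf₁ hf₂ ⊢
      exact finrank_polytope_of_between A B C hQ₀ h₀ h₁ h₂ hf₁ hf₂
    · have hface : ∀ ε, face A B C i ε = ∅ := fun ε =>
        face_eq_empty A B C hA (by simp [hB, hC])
      rwa [IsFacet, hface] at hf₁ ⊢
  · exact isFacet_of_between_of_row_ne_zero A B C hA h₁.le h₂ hf₁ hf₂

theorem exists_finset_isFacet_iff (hQ₀ : finrank ℝ (vectorSpan ℝ (polytope A B C 0)) = n)
    (i : ι) : ∃ T : Finset ℝ, ∀ a b, 0 ≤ a → a ≤ b → (∀ t ∈ T, t ∉ Icc a b) →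
      (IsFacet A B C i a ↔ IsFacet A B C i b) := by
  by_cases hi : A i ≠ 0 ∨ C i = 0
  · set W := {ε | 0 ≤ ε ∧ IsFacet A B C i ε}
    refine ⟨{sInf W, sSup W}, fun a b ha hab hT => ?_⟩
    have hW := (ordConnected_isFacet A B C hQ₀ hi).mem_iff_mem_of_csInf_notMem_of_csSup_notMem
      hab (hT _ (Finset.mem_insert_self _ _))
      (hT _ (Finset.mem_insert_of_mem (Finset.mem_singleton_self _)))
    simpa [W, ha, ha.trans hab] using hW
  · push Not at hi
    obtain ⟨hA, hC⟩ := hi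
    refine ⟨{-B i / C i}, fun a b _ hab hT => ?_⟩
    have hface : ∀ ε ∈ Icc a b, face A B C i ε = ∅ := fun ε hε =>
      face_eq_empty A B C hA fun h => hT _ (Finset.mem_singleton_self _) (by
        rwa [show -B i / C i = ε by field_simp; linarith])
    rw [IsFacet, IsFacet, hface a ⟨le_rfl, hab⟩, hface b ⟨hab, le_rfl⟩]

end ParametricPolytope

open ParametricPolytope

theorem stmt_17_general (m n : ℕ) (A : Matrix (Fin m) (Fin n) ℝ) (B C : Fin m → ℝ)
    (hfull : (interior {x : Fin n → ℝ | B ≤ A.mulVec x}).Nonempty) :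
    let Q : ℝ → Set (Fin n → ℝ) := fun ε => {x | B + ε • C ≤ A.mulVec x}
    let facets : ℝ → Set (Fin m) := fun ε =>
      {i | Module.finrank ℝ
        (vectorSpan ℝ (Q ε ∩ {x | A.mulVec x i = B i + ε * C i})) = n - 1}
    ∃ (N : ℕ) (α : ℕ → ℝ),
      α 0 = 0 ∧
      (∀ j < N, α j < α (j + 1)) ∧
      (∀ j < N, ∀ ε₁ ∈ Set.Ioo (α j) (α (j + 1)),
        ∀ ε₂ ∈ Set.Ioo (α j) (α (j + 1)), facets ε₁ = facets ε₂) ∧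
      (BddAbove {ε : ℝ | 0 ≤ ε ∧ (Q ε).Nonempty} →
        α N = sSup {ε : ℝ | 0 ≤ ε ∧ (Q ε).Nonempty}) := by
  intro Q facets
  have hQ₀ : finrank ℝ (vectorSpan ℝ (polytope A B C 0)) = n := by
    rw [polytope_zero, finrank_vectorSpan_of_interior_nonempty hfull,
      finrank_fin_fun]
  choose T hT using exists_finset_isFacet_iff A B C hQ₀
  obtain ⟨N, α, h₀, hlt, hconst, hN⟩ :=
    exists_partition_constant_on_gaps (f := fun ε => {i | IsFacet A B C i ε})
    (Finset.univ.biUnion T) (lo := 0) (hi := sSup {ε : ℝ | 0 ≤ ε ∧ (Q ε).Nonempty})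
    (Real.sSup_nonneg fun ε hε => hε.1)
    fun a b ha hab hTab => Set.ext fun i => hT i a b ha hab fun t ht =>
      hTab t (Finset.mem_biUnion.2 ⟨i, Finset.mem_univ i, ht⟩)
  exact ⟨N, α, h₀, hlt, hconst, fun _ => hN⟩

/-- There are finitely many parameters `0 = α₀ < α₁ < ⋯ < α_N` (with
`α_N = sup {ε ≥ 0 : Q^ε ≠ ∅}` when that set is bounded above) such that on
each open interval `(α_j, α_{j+1})` the set of rows of `A` defining facets of
`Q^ε` is constant. -/
theorem stmt_17 (m n : ℕ) (A : Matrix (Fin m) (Fin n) ℝ) (B C : Fin m → ℝ)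
    (hne : {x : Fin n → ℝ | B ≤ A.mulVec x}.Nonempty)
    (hbdd : Bornology.IsBounded {x : Fin n → ℝ | B ≤ A.mulVec x})
    (hfull : (interior {x : Fin n → ℝ | B ≤ A.mulVec x}).Nonempty) :
    let Q : ℝ → Set (Fin n → ℝ) := fun ε => {x | B + ε • C ≤ A.mulVec x}
    let facets : ℝ → Set (Fin m) := fun ε =>
      {i | Module.finrank ℝ
        (vectorSpan ℝ (Q ε ∩ {x | A.mulVec x i = B i + ε * C i})) = n - 1}
    ∃ (N : ℕ) (α : ℕ → ℝ),
      α 0 = 0 ∧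
      (∀ j < N, α j < α (j + 1)) ∧
      (∀ j < N, ∀ ε₁ ∈ Set.Ioo (α j) (α (j + 1)),
        ∀ ε₂ ∈ Set.Ioo (α j) (α (j + 1)), facets ε₁ = facets ε₂) ∧
      (BddAbove {ε : ℝ | 0 ≤ ε ∧ (Q ε).Nonempty} →
        α N = sSup {ε : ℝ | 0 ≤ ε ∧ (Q ε).Nonempty}) :=
  stmt_17_general m n A B C hfull
end
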